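/- arXiv:1910.02268 — 5 statements merged into one kernel-verified Lean document; each statement's English description precedes it below -/
import Mathlib

section
/- Let f : ℝ → ℝ be continuous, f(τ) ≥ 0 for all τ, ∫_{τ₁}^{τ₂} f > 0 for all τ₁ < τ₂, and suppose liminf_{τ→+∞} f(τ) > 0 and liminf_{τ→−∞} f(τ) > 0. Then every bounded C² solution y : ℝ → ℝ of y'' = f·y is identically zero. -/
/-- If `y'' = f·y` with `f ≥ 0` continuous, `∫_{τ₁}^{τ₂} f > 0` for all `τ₁ < τ₂`, and
`liminf f > 0` at `±∞`, then every bounded `C²` solution `y` is identically zero. -/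
theorem stmt7 (f y : ℝ → ℝ) (hf : Continuous f) (hf0 : ∀ τ, 0 ≤ f τ)
    (hfint : ∀ τ₁ τ₂ : ℝ, τ₁ < τ₂ → 0 < ∫ τ in τ₁..τ₂, f τ)
    (hliminfTop : 0 < Filter.liminf f Filter.atTop)
    (hliminfBot : 0 < Filter.liminf f Filter.atBot)
    (hy : ContDiff ℝ 2 y)
    (hode : ∀ τ, deriv (deriv y) τ = f τ * y τ)
    (hbdd : ∃ C : ℝ, ∀ τ, |y τ| ≤ C) :
    ∀ τ, y τ = 0 := by
  obtain ⟨C, hC⟩ := hbdd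
  have hy1 : Differentiable ℝ y := hy.differentiable (by norm_num)
  have hy2 : ContDiff ℝ 1 (deriv y) := by
    have : ContDiff ℝ (1 + 1) y := by norm_num; exact hy
    exact (contDiff_succ_iff_deriv.mp this).2.2
  have hy1' : Differentiable ℝ (deriv y) := hy2.differentiable (by norm_num)
  set g : ℝ → ℝ := fun τ => y τ * deriv y τ with hg
  have hgd : ∀ τ, HasDerivAt g ((deriv y τ) ^ 2 + f τ * (y τ) ^ 2) τ := by
    intro τ
    have h := (hy1 τ).hasDerivAt.fun_mul (hy1' τ).hasDerivAt
    rw [hode τ] at h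
    refine h.congr_deriv ?_
    ring
  have hgdiff : Differentiable ℝ g := fun τ => (hgd τ).differentiableAt
  have hgmono : Monotone g := by
    apply monotone_of_deriv_nonneg hgdiff
    intro τ
    rw [(hgd τ).deriv]
    have := mul_nonneg (hf0 τ) (sq_nonneg (y τ))
    nlinarith [sq_nonneg (deriv y τ)]
  have hsq : ∀ τ, HasDerivAt (fun t => y t ^ 2) (2 * g τ) τ := by
    intro τ
    have h := (hy1 τ).hasDerivAt.fun_pow 2
    refine h.congr_deriv ?_
    simp [hg]; ring
  have hCnn : 0 ≤ C := le_trans (abs_nonneg _) (hC 0)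
  have hy2le : ∀ τ, y τ ^ 2 ≤ C ^ 2 := by
    intro τ
    have h := hC τ
    have := abs_nonneg (y τ)
    nlinarith [sq_abs (y τ)]
  -- g is identically zero
  have hg0 : ∀ a, g a = 0 := by
    intro a
    by_contra hga
    set b := a + (C ^ 2 + 1) / (2 * g a) with hb
    -- auxiliary function h t = y t ^ 2 - 2 * g a * t
    set h : ℝ → ℝ := fun t => y t ^ 2 - 2 * g a * t with hh
    have hhd : ∀ τ, HasDerivAt h (2 * g τ - 2 * g a) τ := by
      intro τ
      exact (hsq τ).sub (((hasDerivAt_id τ).const_mul (2 * g a)).congr_deriv (by ring))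
    have key : y a ^ 2 + (C ^ 2 + 1) ≤ y b ^ 2 := by
      rcases lt_or_gt_of_ne hga with hneg | hpos
      · -- g a < 0 : h is antitone on Iic a, b ≤ a
        have hanti : AntitoneOn h (Set.Iic a) := by
          apply antitoneOn_of_deriv_nonpos (convex_Iic a)
          · exact ((hy1.continuous.pow 2).sub (continuous_const.mul continuous_id)).continuousOn
          · exact fun τ _ => (hhd τ).differentiableAt.differentiableWithinAt
          · intro τ hτ
            rw [(hhd τ).deriv]
            rw [interior_Iic, Set.mem_Iio] at hτ
            have := hgmono hτ.le
            linarith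
        have hba : b ≤ a := by
          rw [hb]
          have : (C ^ 2 + 1) / (2 * g a) ≤ 0 := by
            apply div_nonpos_of_nonneg_of_nonpos (by positivity)
            linarith
          linarith
        have := hanti (Set.mem_Iic.mpr hba) (Set.mem_Iic.mpr le_rfl) hba
        have hba' : y a ^ 2 - 2 * g a * a ≤ y b ^ 2 - 2 * g a * b := this
        have hcancel : 2 * g a * (b - a) = C ^ 2 + 1 := by
          rw [hb]
          field_simp
          ring
        nlinarith
      · -- g a > 0 : h is monotone on Ici a, a ≤ b
        have hmono : MonotoneOn h (Set.Ici a) := by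
          apply monotoneOn_of_deriv_nonneg (convex_Ici a)
          · exact ((hy1.continuous.pow 2).sub (continuous_const.mul continuous_id)).continuousOn
          · exact fun τ _ => (hhd τ).differentiableAt.differentiableWithinAt
          · intro τ hτ
            rw [(hhd τ).deriv]
            rw [interior_Ici, Set.mem_Ioi] at hτ
            have := hgmono hτ.le
            linarith
        have hab : a ≤ b := by
          rw [hb]
          have : 0 ≤ (C ^ 2 + 1) / (2 * g a) := by positivity
          linarith
        have := hmono (Set.mem_Ici.mpr le_rfl) (Set.mem_Ici.mpr hab) hab
        have hba' : y a ^ 2 - 2 * g a * a ≤ y b ^ 2 - 2 * g a * b := this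
        have hcancel : 2 * g a * (b - a) = C ^ 2 + 1 := by
          rw [hb]
          field_simp
          ring
        nlinarith
    nlinarith [hy2le b, sq_nonneg (y a)]
  -- y ^ 2 is constant
  have hconst : ∀ s t : ℝ, y s ^ 2 = y t ^ 2 := by
    apply is_const_of_deriv_eq_zero
    · exact fun τ => (hsq τ).differentiableAt
    · intro τ
      rw [(hsq τ).deriv, hg0 τ]
      ring
  intro τ
  by_contra hτ
  have hk : ∀ t, y t ≠ 0 := by
    intro t h0
    have := hconst t τ
    rw [h0] at this
    have h0' : y τ ^ 2 = 0 := by rw [← this]; norm_num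
    exact hτ (by nlinarith)
  -- y has constant sign, hence constant
  have hyconst : ∀ t, y t = y τ := by
    intro t
    have h1 : y t ^ 2 = y τ ^ 2 := hconst t τ
    have h2 : y t = y τ ∨ y t = -(y τ) := sq_eq_sq_iff_eq_or_eq_neg.mp h1
    rcases h2 with h | h
    · exact h
    · exfalso
      -- IVT: y takes value 0 between t and τ
      have hcont : ContinuousOn y (Set.uIcc t τ) := hy1.continuous.continuousOn
      have hmem : (0 : ℝ) ∈ Set.uIcc (y t) (y τ) := by
        rw [Set.mem_uIcc, h]
        rcases le_total 0 (y τ) with hc | hc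
        · left; constructor <;> linarith
        · right; constructor <;> linarith
      obtain ⟨u, _, hu⟩ := intermediate_value_uIcc hcont hmem
      exact hk u hu
  have hdy0 : ∀ t, deriv y t = 0 := by
    have hyeq : y = fun _ => y τ := funext hyconst
    intro t
    rw [hyeq]
    simp
  have hddy0 : ∀ t, deriv (deriv y) t = 0 := by
    have : deriv y = fun _ => (0 : ℝ) := funext hdy0
    intro t
    rw [this]
    simp
  have hf00 : ∀ t, f t = 0 := by
    intro t
    have := hode t
    rw [hddy0 t, hyconst t] at this
    rcases mul_eq_zero.mp this.symm with h | h
    · exact h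
    · exact absurd h hτ
  have : (0 : ℝ) < ∫ τ in (0:ℝ)..1, f τ := hfint 0 1 one_pos
  rw [show f = fun _ => (0:ℝ) from funext hf00] at this
  simp at this
end

section
/- Let f : ℝ → ℝ be continuous, nonnegative, with ∫_{τ₁}^{τ₂} f > 0 for all τ₁ < τ₂ and liminf_{τ→−∞} f(τ) > 0. If y is a C² solution of y'' = f·y on ℝ with y(τ) → 0 and y'(τ) → 0 as τ → −∞, and y(τ₀)·y'(τ₀) = 0 for some τ₀ ∈ ℝ, then y is identically zero on (−∞, τ₀]. -/
open Filter Set Topology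

/-!
Along a solution of `y'' = f y` with `f ≥ 0`, the product `y y'` has derivative `y'² + f y² ≥ 0`,
so it is nondecreasing. If it vanishes at `τ₀`, it is `≤ 0` on `(-∞, τ₀]`, where therefore
`y²` (whose derivative is `2 y y'`) is nonincreasing. A nonincreasing function tending to `0`
at `-∞` is `≤ 0`, so `y² = 0` on `(-∞, τ₀]`.
-/

lemma hasDerivAt_mul_deriv {y : ℝ → ℝ} {t : ℝ} (hy : DifferentiableAt ℝ y t)
    (hy' : DifferentiableAt ℝ (deriv y) t) :
    HasDerivAt (fun s => y s * deriv y s) (deriv y t ^ 2 + y t * deriv (deriv y) t) t :=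
  (hy.hasDerivAt.mul hy'.hasDerivAt).congr_deriv (by ring)

lemma monotone_mul_deriv_of_deriv_deriv_eq_mul {f y : ℝ → ℝ} (hf0 : ∀ t, 0 ≤ f t)
    (hy : ContDiff ℝ 2 y) (hode : ∀ t, deriv (deriv y) t = f t * y t) :
    Monotone fun t => y t * deriv y t := by
  have hdy : Differentiable ℝ y := hy.differentiable (by norm_num)
  have hddy : Differentiable ℝ (deriv y) :=
    ((contDiff_succ_iff_deriv (n := 1)).mp hy).2.2.differentiable one_ne_zero
  have hE t := hasDerivAt_mul_deriv (hdy t) (hddy t)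
  refine monotone_of_deriv_nonneg (fun t => (hE t).differentiableAt) fun t => ?_
  rw [(hE t).deriv, hode]
  nlinarith [sq_nonneg (deriv y t), mul_nonneg (hf0 t) (sq_nonneg (y t))]

lemma antitoneOn_sq_Iic_of_mul_deriv_nonpos {y : ℝ → ℝ} (hy : Differentiable ℝ y) {b : ℝ}
    (hb : ∀ t ≤ b, y t * deriv y t ≤ 0) : AntitoneOn (fun t => y t ^ 2) (Iic b) := by
  refine antitoneOn_of_deriv_nonpos (convex_Iic b) (hy.pow 2).continuous.continuousOn
    (hy.pow 2).differentiableOn fun t ht => ?_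
  rw [interior_Iic] at ht
  have hderiv : deriv (fun s => y s ^ 2) t = 2 * (y t * deriv y t) := by
    rw [deriv_fun_pow (hy t)]
    ring
  rw [hderiv]
  linarith [hb t ht.le]

lemma AntitoneOn.le_of_tendsto_atBot {α β : Type*} [SemilatticeInf α] [Nonempty α]
    [TopologicalSpace β] [Preorder β] [ClosedIciTopology β] {g : α → β} {a : β} {b x : α}
    (hg : AntitoneOn g (Iic b)) (hlim : Tendsto g atBot (𝓝 a)) (hx : x ≤ b) : g x ≤ a :=
  ge_of_tendsto hlim (eventually_atBot.2 ⟨x, fun _ hs => hg (hs.trans hx) hx hs⟩)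

theorem stmt8_general (f y : ℝ → ℝ) (hf0 : ∀ τ, 0 ≤ f τ)
    (hy : ContDiff ℝ 2 y)
    (hode : ∀ τ, deriv (deriv y) τ = f τ * y τ)
    (hy0 : Filter.Tendsto y Filter.atBot (nhds 0))
    (τ₀ : ℝ) (hcross : y τ₀ * deriv y τ₀ = 0) :
    ∀ τ ≤ τ₀, y τ = 0 := by
  intro τ hτ
  have hprod_nonpos : ∀ t ≤ τ₀, y t * deriv y t ≤ 0 := fun t ht =>
    hcross ▸ monotone_mul_deriv_of_deriv_deriv_eq_mul hf0 hy hode ht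
  have hsq_anti := antitoneOn_sq_Iic_of_mul_deriv_nonpos (hy.differentiable (by norm_num))
    hprod_nonpos
  have hsq : y τ ^ 2 ≤ 0 := hsq_anti.le_of_tendsto_atBot (by simpa using hy0.pow 2) hτ
  exact pow_eq_zero_iff two_ne_zero |>.1 (le_antisymm hsq (sq_nonneg _))

/-- Nondegeneracy lemma: if `y'' = f·y` with `f ≥ 0` continuous, `∫_{τ₁}^{τ₂} f > 0` for all
`τ₁ < τ₂`, `liminf_{−∞} f > 0`, `y, y' → 0` at `−∞` and `y(τ₀)y'(τ₀) = 0`, then `y ≡ 0`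
on `(−∞, τ₀]`. -/
theorem stmt8 (f y : ℝ → ℝ) (hf : Continuous f) (hf0 : ∀ τ, 0 ≤ f τ)
    (hfint : ∀ τ₁ τ₂ : ℝ, τ₁ < τ₂ → 0 < ∫ τ in τ₁..τ₂, f τ)
    (hliminfBot : 0 < Filter.liminf f Filter.atBot)
    (hy : ContDiff ℝ 2 y)
    (hode : ∀ τ, deriv (deriv y) τ = f τ * y τ)
    (hy0 : Filter.Tendsto y Filter.atBot (nhds 0))
    (hy'0 : Filter.Tendsto (deriv y) Filter.atBot (nhds 0))
    (τ₀ : ℝ) (hcross : y τ₀ * deriv y τ₀ = 0) :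
    ∀ τ ≤ τ₀, y τ = 0 :=
  stmt8_general f y hf0 hy hode hy0 τ₀ hcross
end

section
/- Let b > 0 and v(τ) = −√(2b)·tanh(√(2b)·τ/2), and consider the 2×2 linear Hamiltonian system η' = J𝓑₀(τ)η with 𝓑₀(τ) = [[1, v(τ)/4],[v(τ)/4, 0]] and J = [[0,−1],[1,0]]. Let r(τ) = cosh(√(2b)·τ/2)^{−2}. Then ξ₁(τ) = (0, r(τ)^{1/4})ᵀ is a solution of this system, and ξ₁(τ) → 0 as τ → ±∞. -/
open Matrix Filter Real

private lemma cosh_atTop : Tendsto Real.cosh atTop atTop := by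
  apply tendsto_atTop_mono (fun x => ?_) (Real.tendsto_exp_atTop.atTop_div_const two_pos)
  have := Real.exp_pos (-x)
  rw [Real.cosh_eq]; linarith

private lemma cosh_atBot : Tendsto Real.cosh atBot atTop := by
  have : Real.cosh = fun x => Real.cosh (-x) := by funext x; rw [Real.cosh_neg]
  rw [this]
  exact cosh_atTop.comp tendsto_neg_atBot_atTop

/-- The degenerate direction for the homothetic solution: `ξ₁(τ) = (0, r(τ)^{1/4})ᵀ` solves
`η' = J𝓑₀(τ)η` with `𝓑₀ = [[1, v/4],[v/4, 0]]`, and `ξ₁ → 0` as `τ → ±∞`. -/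
theorem stmt14 (b : ℝ) (hb : 0 < b) :
    let v : ℝ → ℝ := fun τ => -Real.sqrt (2 * b) * Real.tanh (Real.sqrt (2 * b) * τ / 2)
    let B : ℝ → Matrix (Fin 2) (Fin 2) ℝ := fun τ => !![1, v τ / 4; v τ / 4, 0]
    let J : Matrix (Fin 2) (Fin 2) ℝ := !![0, -1; 1, 0]
    let r : ℝ → ℝ := fun τ => (Real.cosh (Real.sqrt (2 * b) * τ / 2)) ^ (-2 : ℤ)
    let ξ : ℝ → Fin 2 → ℝ := fun τ => ![0, r τ ^ ((1 : ℝ) / 4)]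
    (∀ τ, HasDerivAt ξ ((J * B τ).mulVec (ξ τ)) τ) ∧
    Filter.Tendsto ξ Filter.atTop (nhds 0) ∧
    Filter.Tendsto ξ Filter.atBot (nhds 0) := by
  intro v B J r ξ
  set σ := Real.sqrt (2 * b) with hσdef
  have hσ : 0 < σ := Real.sqrt_pos.mpr (by linarith)
  have hc : ∀ τ, 0 < Real.cosh (σ * τ / 2) := fun τ => Real.cosh_pos _
  have hξ : ξ = fun τ => ![0, Real.cosh (σ * τ / 2) ^ (-(1/2) : ℝ)] := by
    funext τ
    have h1 : r τ = Real.cosh (σ * τ / 2) ^ ((-2 : ℤ) : ℝ) :=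
      (Real.rpow_intCast _ _).symm
    show ![0, r τ ^ ((1:ℝ)/4)] = _
    rw [h1, ← Real.rpow_mul (hc τ).le]
    norm_num
  have hu : ∀ τ : ℝ, HasDerivAt (fun τ : ℝ => σ * τ / 2) (σ / 2) τ := by
    intro τ
    simpa using ((hasDerivAt_id τ).const_mul σ).div_const 2
  have hcd : ∀ τ : ℝ, HasDerivAt (fun τ => Real.cosh (σ * τ / 2))
      (Real.sinh (σ * τ / 2) * (σ / 2)) τ := fun τ => (hu τ).cosh
  have hg : ∀ τ : ℝ, HasDerivAt (fun τ => Real.cosh (σ * τ / 2) ^ (-(1/2) : ℝ))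
      (v τ / 4 * Real.cosh (σ * τ / 2) ^ (-(1/2) : ℝ)) τ := by
    intro τ
    have h := (hcd τ).rpow_const (p := (-(1/2) : ℝ)) (Or.inl (hc τ).ne')
    convert h using 1
    have hne := (hc τ).ne'
    have hsplit : Real.cosh (σ * τ / 2) ^ ((-(1/2) : ℝ) - 1)
        = (Real.cosh (σ * τ / 2))⁻¹ * Real.cosh (σ * τ / 2) ^ (-(1/2) : ℝ) := by
      rw [← Real.rpow_neg_one _, ← Real.rpow_add (hc τ)]
      norm_num
    have hv : v τ = -σ * Real.tanh (σ * τ / 2) := rfl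
    show v τ / 4 * _ = _
    rw [hsplit, hv, Real.tanh_eq_sinh_div_cosh]
    field_simp
    ring
  refine ⟨?_, ?_, ?_⟩
  · intro τ
    rw [hξ, hasDerivAt_pi]
    intro i
    fin_cases i
    · simpa [J, B, Matrix.mul_apply, Matrix.mulVec, dotProduct, Fin.sum_univ_two]
        using hasDerivAt_const τ (0:ℝ)
    · have h := hg τ
      convert h using 1
      case e'_4 => rfl
      case e'_5 => rfl
      case e'_8 => rfl
      case e'_9 =>
      simp [J, B, Matrix.mul_apply, Matrix.mulVec, dotProduct, Fin.sum_univ_two]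
  · rw [hξ, tendsto_pi_nhds]
    intro i
    fin_cases i
    · simp only [Matrix.cons_val_zero]
      exact tendsto_const_nhds
    · have harg : Tendsto (fun τ : ℝ => σ * τ / 2) atTop atTop :=
        (tendsto_id.const_mul_atTop hσ).atTop_div_const two_pos
      have := (tendsto_rpow_neg_atTop (by norm_num : (0:ℝ) < 1/2)).comp
        (cosh_atTop.comp harg)
      simpa [Function.comp_def] using this
  · rw [hξ, tendsto_pi_nhds]
    intro i
    fin_cases i
    · simp only [Matrix.cons_val_zero]
      exact tendsto_const_nhds
    · have harg : Tendsto (fun τ : ℝ => σ * τ / 2) atBot atBot := by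
        apply Tendsto.atBot_div_const two_pos
        exact tendsto_id.const_mul_atBot hσ
      have := (tendsto_rpow_neg_atTop (by norm_num : (0:ℝ) < 1/2)).comp
        (cosh_atBot.comp harg)
      simpa [Function.comp_def] using this
end

section
/- Let b > 0, λ₀ ∈ ℝ, and v(τ) = −√(2b)·tanh(√(2b)·τ/2). Suppose (y, x) : ℝ → ℝ² solves the system y' = −(v/4)·y + λ₀·x, x' = y + (v/4)·x. Then y is C² and satisfies the scalar second-order equation y'' = f(τ)·y where f(τ) = (b/8)·(1 − tanh²(√(2b)·τ/2)) + λ₀ + b/8. In particular, if λ₀ > −b/8 then f(τ) > 0 for all τ and lim_{τ→±∞} f(τ) = λ₀ + b/8 > 0. -/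
/-!
Differentiating `y' = -(v/4) y + λ₀ x` once more, the `x`-terms cancel and
`y'' = (λ₀ + v²/16 - v'/4) y`. The kink `v = -√(2b) tanh(√(2b) τ/2)` solves the Riccati equation
`v' = v²/2 - b`, so the coefficient is `λ₀ + b/4 - v²/16`, which is the given `f`. Since
`tanh² < 1` and `tanh → ±1` at `±∞`, `f > λ₀ + b/8` everywhere and `f → λ₀ + b/8` at `±∞`.
-/

open Filter Topology Real

namespace Real

theorem hasDerivAt_tanh (x : ℝ) : HasDerivAt tanh (1 - tanh x ^ 2) x := by
  have h := (hasDerivAt_sinh x).div (hasDerivAt_cosh x) (cosh_pos x).ne'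
  rw [show sinh / cosh = tanh from funext fun y => (tanh_eq_sinh_div_cosh y).symm] at h
  refine h.congr_deriv ?_
  have hc := (cosh_pos x).ne'
  rw [tanh_eq_sinh_div_cosh]
  field_simp

@[fun_prop]
theorem continuous_tanh : Continuous tanh :=
  continuous_iff_continuousAt.2 fun x => (hasDerivAt_tanh x).continuousAt

theorem tanh_eq_one_sub_two_div (x : ℝ) : tanh x = 1 - 2 / (exp (2 * x) + 1) := by
  have h : exp (2 * x) = exp x * exp x := by rw [← exp_add, two_mul]
  rw [tanh_eq_sinh_div_cosh, sinh_eq, cosh_eq, exp_neg, h]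
  have := exp_pos x
  field_simp
  ring

theorem tendsto_tanh_atTop : Tendsto tanh atTop (𝓝 1) := by
  have hexp : Tendsto (fun x : ℝ => exp (2 * x) + 1) atTop atTop :=
    tendsto_atTop_add_const_right _ 1
      (tendsto_exp_atTop.comp (tendsto_id.const_mul_atTop two_pos))
  simpa [← tanh_eq_one_sub_two_div] using
    (tendsto_const_nhds (x := (2 : ℝ))).div_atTop hexp |>.const_sub 1

theorem tendsto_tanh_atBot : Tendsto tanh atBot (𝓝 (-1)) := by
  simpa [Function.comp_def] using (tendsto_tanh_atTop.comp tendsto_neg_atBot_atTop).neg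

theorem tendsto_tanh_sq_atTop : Tendsto (fun x => tanh x ^ 2) atTop (𝓝 1) := by
  simpa using tendsto_tanh_atTop.pow 2

theorem tendsto_tanh_sq_atBot : Tendsto (fun x => tanh x ^ 2) atBot (𝓝 1) := by
  simpa using tendsto_tanh_atBot.pow 2

end Real

theorem hasDerivAt_neg_mul_tanh_half (c τ : ℝ) :
    HasDerivAt (fun τ => -c * tanh (c * τ / 2))
      ((-c * tanh (c * τ / 2)) ^ 2 / 2 - c ^ 2 / 2) τ := by
  have hlin : HasDerivAt (fun τ : ℝ => c * τ / 2) (c / 2) τ := by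
    simpa using ((hasDerivAt_id τ).const_mul c).div_const 2
  refine (((hasDerivAt_tanh _).comp τ hlin).const_mul (-c)).congr_deriv ?_
  ring

theorem contDiff_two_of_hasDerivAt_deriv {y y'' : ℝ → ℝ} (hy : Differentiable ℝ y)
    (hy' : ∀ τ, HasDerivAt (deriv y) (y'' τ) τ) (hy'' : Continuous y'') : ContDiff ℝ 2 y := by
  rw [show (2 : WithTop ℕ∞) = 1 + 1 from rfl, contDiff_succ_iff_deriv]
  refine ⟨hy, by simp, contDiff_one_iff_deriv.2 ⟨fun τ => (hy' τ).differentiableAt, ?_⟩⟩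
  rwa [show deriv (deriv y) = y'' from funext fun τ => (hy' τ).deriv]

theorem hasDerivAt_deriv_of_riccati {b lam : ℝ} {v y x : ℝ → ℝ}
    (hv : ∀ τ, HasDerivAt v (v τ ^ 2 / 2 - b) τ)
    (hy : ∀ τ, HasDerivAt y (-(v τ / 4) * y τ + lam * x τ) τ)
    (hx : ∀ τ, HasDerivAt x (y τ + (v τ / 4) * x τ) τ) (τ : ℝ) :
    HasDerivAt (deriv y) ((lam + b / 4 - v τ ^ 2 / 16) * y τ) τ := by
  rw [show deriv y = fun τ => -(v τ / 4) * y τ + lam * x τ from funext fun τ => (hy τ).deriv]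
  refine ((((hv τ).div_const 4).neg.mul (hy τ)).add ((hx τ).const_mul lam)).congr_deriv ?_
  simp only [Pi.neg_apply]
  ring

/-- If `(y,x)` solves `y' = −(v/4)y + λ₀x`, `x' = y + (v/4)x` with
`v(τ) = −√(2b)tanh(√(2b)τ/2)`, then `y` is `C²` and `y'' = f·y` with
`f(τ) = (b/8)(1 − tanh²(√(2b)τ/2)) + λ₀ + b/8`; if `λ₀ > −b/8` then `f > 0` everywhere
and `f → λ₀ + b/8 > 0` at `±∞`. -/
theorem stmt15 (b lam : ℝ) (hb : 0 < b) (v f y x : ℝ → ℝ)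
    (hv : v = fun τ => -Real.sqrt (2 * b) * Real.tanh (Real.sqrt (2 * b) * τ / 2))
    (hfdef : f = fun τ =>
      b / 8 * (1 - Real.tanh (Real.sqrt (2 * b) * τ / 2) ^ 2) + lam + b / 8)
    (hy : ∀ τ, HasDerivAt y (-(v τ / 4) * y τ + lam * x τ) τ)
    (hx : ∀ τ, HasDerivAt x (y τ + (v τ / 4) * x τ) τ) :
    ContDiff ℝ 2 y ∧
    (∀ τ, deriv (deriv y) τ = f τ * y τ) ∧
    (lam > -b / 8 →
      (∀ τ, 0 < f τ) ∧
      Filter.Tendsto f Filter.atTop (nhds (lam + b / 8)) ∧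
      Filter.Tendsto f Filter.atBot (nhds (lam + b / 8)) ∧
      0 < lam + b / 8) := by
  set c := √(2 * b)
  have hc : 0 < c := sqrt_pos.2 (by positivity)
  have hc2 : c ^ 2 = 2 * b := sq_sqrt (by positivity)
  have hriccati : ∀ τ, HasDerivAt v (v τ ^ 2 / 2 - b) τ := fun τ => by
    simpa [hv, hc2] using hasDerivAt_neg_mul_tanh_half c τ
  have hy'' : ∀ τ, HasDerivAt (deriv y) (f τ * y τ) τ := fun τ => by
    convert hasDerivAt_deriv_of_riccati hriccati hy hx τ using 2
    simp only [hv, hfdef]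
    linear_combination (tanh (c * τ / 2) ^ 2 / 16) * hc2
  have hf : Continuous f := by
    rw [hfdef]
    fun_prop
  have hlim : ∀ l, Tendsto (fun τ => tanh (c * τ / 2) ^ 2) l (𝓝 1) →
      Tendsto f l (𝓝 (lam + b / 8)) := fun l ht => by
    rw [hfdef]
    simpa using (((ht.const_sub 1).const_mul (b / 8)).add_const lam).add_const (b / 8)
  have hyd : Differentiable ℝ y := fun τ => (hy τ).differentiableAt
  refine ⟨contDiff_two_of_hasDerivAt_deriv hyd hy'' (hf.mul hyd.continuous),
    fun τ => (hy'' τ).deriv, fun hlam => ⟨fun τ => ?_, ?_, ?_, by linarith⟩⟩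
  · rw [hfdef]
    nlinarith [tanh_sq_lt_one (c * τ / 2)]
  · exact hlim _ <| tendsto_tanh_sq_atTop.comp <|
      (tendsto_id.const_mul_atTop hc).atTop_div_const two_pos
  · exact hlim _ <| tendsto_tanh_sq_atBot.comp <|
      (tendsto_id.const_mul_atBot hc).atBot_div_const two_pos
end

section
/- Let H₀ > 0 and v* = ±√(2H₀), and consider the 2×2 matrices B̂₁ = [[1, −v*/2],[−v*/2, 0]] and, for a symmetric positive definite k×k matrix M̂, the 2k×2k matrix B̂₂ = [[M̂⁻¹, (v*/2)I],[(v*/2)I, 0]]. Then J·B̂₁ has eigenvalues ±v*/2 (hence is hyperbolic), and J·B̂₂ is hyperbolic: every eigenvalue μ of J·B̂₂ satisfies μ² ≥ (v*)²/4 > 0 after conjugating by the symplectic matrix diag(Aᵀ, A⁻¹) with AᵀM̂A = I and applying the shear reduction, so that J·B̂₂ is conjugate to J·diag(I, ((v*)²/4)I) whose eigenvalues are ±|v*|/2. -/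
/-!
Both matrices are lower triangular (blockwise for `J·B̂₂`):
`J·B̂₁ = [[v*/2, 0], [1, -v*/2]]` and `J·B̂₂ = [[-(v*/2)I, 0], [M̂⁻¹, (v*/2)I]]`,
so the characteristic polynomial of `J·B̂₂` is `(μ + v*/2)ᵏ (μ - v*/2)ᵏ` whatever `M̂` is,
and the spectrum is `{±v*/2} = {±|v*|/2}`. Since `v*² = 2H₀ > 0`, neither eigenvalue is imaginary.
-/

open Matrix

theorem Matrix.spectrum_eq_setOf_det_eq_zero {K n : Type*} [Field K] [Fintype n] [DecidableEq n]
    (M : Matrix n n K) : spectrum K M = {μ | (μ • 1 - M).det = 0} := by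
  ext μ
  rw [spectrum.mem_iff, isUnit_iff_isUnit_det, isUnit_iff_ne_zero, not_not,
    Algebra.algebraMap_eq_smul_one]
  rfl

theorem Matrix.spectrum_fin_two_of_lowerTriangular {K : Type*} [Field K] (a b c : K) :
    spectrum K !![a, 0; c, b] = {a, b} := by
  rw [spectrum_eq_setOf_det_eq_zero]
  ext μ
  have hdet : (μ • 1 - !![a, 0; c, b]).det = (μ - a) * (μ - b) := by
    simp [det_fin_two, one_fin_two]
  simp [hdet, sub_eq_zero]

theorem Matrix.spectrum_fromBlocks_smul_one_zero {K l m : Type*} [Field K]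
    [Fintype l] [DecidableEq l] [Nonempty l] [Fintype m] [DecidableEq m] [Nonempty m]
    (a b : K) (C : Matrix m l K) :
    spectrum K (fromBlocks (a • 1 : Matrix l l K) 0 C (b • 1 : Matrix m m K)) = {a, b} := by
  rw [spectrum_eq_setOf_det_eq_zero]
  ext μ
  have hblocks : μ • (1 : Matrix (l ⊕ m) (l ⊕ m) K) - fromBlocks (a • 1) 0 C (b • 1) =
      fromBlocks ((μ - a) • 1) 0 (-C) ((μ - b) • 1) := by
    ext (i | i) (j | j) <;> simp [one_apply, sub_smul]
  simp [hblocks, det_fromBlocks_zero₁₂, sub_eq_zero, Fintype.card_ne_zero]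

theorem Complex.ofReal_neg_pair_eq_abs_pair (x : ℝ) :
    ({((-x : ℝ) : ℂ), (x : ℂ)} : Set ℂ) = {((|x| : ℝ) : ℂ), -((|x| : ℝ) : ℂ)} := by
  rcases abs_choice x with h | h <;> rw [h]
  · push_cast; exact Set.pair_comm _ _
  · push_cast; rw [neg_neg]

theorem stmt19_general (k : ℕ) (hk : 0 < k) (H₀ vstar : ℝ) (hH : 0 < H₀)
    (hv : vstar ^ 2 = 2 * H₀)
    (Mhat : Matrix (Fin k) (Fin k) ℝ) :
    let J2 : Matrix (Fin 2) (Fin 2) ℝ := !![0, -1; 1, 0]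
    let B₁ : Matrix (Fin 2) (Fin 2) ℝ := !![1, -vstar / 2; -vstar / 2, 0]
    let J : Matrix (Fin k ⊕ Fin k) (Fin k ⊕ Fin k) ℝ := fromBlocks 0 (-1) 1 0
    let B₂ : Matrix (Fin k ⊕ Fin k) (Fin k ⊕ Fin k) ℝ :=
      fromBlocks Mhat⁻¹ ((vstar / 2) • 1) ((vstar / 2) • 1) 0
    spectrum ℝ (J2 * B₁) = {vstar / 2, -vstar / 2} ∧
    spectrum ℂ ((J * B₂).map (algebraMap ℝ ℂ)) =
      {((|vstar| / 2 : ℝ) : ℂ), -((|vstar| / 2 : ℝ) : ℂ)} ∧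
    (∀ μ : ℂ, μ ∈ spectrum ℂ ((J * B₂).map (algebraMap ℝ ℂ)) → μ.re ≠ 0) := by
  intro J2 B₁ J B₂
  have hvstar : vstar ≠ 0 := by
    rintro rfl
    linarith
  have : Nonempty (Fin k) := Fin.pos_iff_nonempty.mp hk
  have hJB₁ : J2 * B₁ = !![vstar / 2, 0; 1, -vstar / 2] := by
    ext i j
    fin_cases i <;> fin_cases j <;> simp [J2, B₁, mul_apply, neg_div]
  have hJB₂ : (J * B₂).map (algebraMap ℝ ℂ) =
      fromBlocks (((-(vstar / 2) : ℝ) : ℂ) • 1) 0 (Mhat⁻¹.map (algebraMap ℝ ℂ))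
        (((vstar / 2 : ℝ) : ℂ) • 1) := by
    simp [J, B₂, fromBlocks_multiply, fromBlocks_map, ← neg_smul, map_smul']
  have hspectrum : spectrum ℂ ((J * B₂).map (algebraMap ℝ ℂ)) =
      {((|vstar| / 2 : ℝ) : ℂ), -((|vstar| / 2 : ℝ) : ℂ)} := by
    rw [hJB₂, spectrum_fromBlocks_smul_one_zero, Complex.ofReal_neg_pair_eq_abs_pair, abs_div, abs_two]
  refine ⟨by rw [hJB₁, spectrum_fin_two_of_lowerTriangular], hspectrum, ?_⟩
  intro μ hμ
  rw [hspectrum] at hμ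
  rcases hμ with rfl | rfl <;> simpa using hvstar

/-- Hyperbolicity at hyperbolic infinity: with `v* = ±√(2H₀)`, `H₀ > 0`,
`J·B̂₁` has eigenvalues `±v*/2`, and for symmetric positive definite `M̂`,
`J·B̂₂` with `B̂₂ = [[M̂⁻¹,(v*/2)I],[(v*/2)I,0]]` is hyperbolic with eigenvalues `±|v*|/2`. -/
theorem stmt19 (k : ℕ) (hk : 0 < k) (H₀ vstar : ℝ) (hH : 0 < H₀)
    (hv : vstar ^ 2 = 2 * H₀)
    (Mhat : Matrix (Fin k) (Fin k) ℝ) (hMs : Mhat.IsSymm) (hMpd : Mhat.PosDef) :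
    let J2 : Matrix (Fin 2) (Fin 2) ℝ := !![0, -1; 1, 0]
    let B₁ : Matrix (Fin 2) (Fin 2) ℝ := !![1, -vstar / 2; -vstar / 2, 0]
    let J : Matrix (Fin k ⊕ Fin k) (Fin k ⊕ Fin k) ℝ := fromBlocks 0 (-1) 1 0
    let B₂ : Matrix (Fin k ⊕ Fin k) (Fin k ⊕ Fin k) ℝ :=
      fromBlocks Mhat⁻¹ ((vstar / 2) • 1) ((vstar / 2) • 1) 0
    spectrum ℝ (J2 * B₁) = {vstar / 2, -vstar / 2} ∧
    spectrum ℂ ((J * B₂).map (algebraMap ℝ ℂ)) =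
      {((|vstar| / 2 : ℝ) : ℂ), -((|vstar| / 2 : ℝ) : ℂ)} ∧
    (∀ μ : ℂ, μ ∈ spectrum ℂ ((J * B₂).map (algebraMap ℝ ℂ)) → μ.re ≠ 0) :=
  stmt19_general k hk H₀ vstar hH hv Mhat
end
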